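/- arXiv:2210.14388 — 10 statements merged into one kernel-verified Lean document; each statement's English description precedes it below -/
import Mathlib

section
/- In the allocation graph G^big, every strongly connected component is closed under arcs: if a is in a strongly connected component S and (a, b) is an arc or (b, a) is an arc, then b ∈ S. -/
/-- Arc of the allocation graph G^big: `(a,b)` is an arc iff `μ a = μE b`. -/
def arcBig {A H : Type*} (μE μ : A → H) (a b : A) : Prop := μ a = μE b

/-- Two agents lie in the same strongly connected component of G^big. -/
def sameSCC {A H : Type*} (μE μ : A → H) (a b : A) : Prop :=
  Relation.ReflTransGen (arcBig μE μ) a b ∧ Relation.ReflTransGen (arcBig μE μ) b a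

/-- For each house type, the number of agents allocated it equals the number endowed with it. -/
def BalancedAlloc {A H : Type*} (μE μ : A → H) : Prop :=
  ∀ h : H, Nat.card {a : A // μ a = h} = Nat.card {a : A // μE a = h}

/-- A directed cycle: a nonempty list of distinct vertices with consecutive arcs,
and an arc from the last vertex back to the first. A single vertex with a
self-loop is a cycle of length 1. -/
def IsCycle {V : Type*} (R : V → V → Prop) (l : List V) : Prop :=
  l ≠ [] ∧ l.Nodup ∧ l.Chain' R ∧ ∀ h : l ≠ [], R (l.getLast h) (l.head h)

/-- A blocking coalition: a nonempty coalition `C` and a reallocation `μ'` of its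
own endowments (as multisets) making every member weakly better off and at least
one member strictly better off, w.r.t. the strict type-preference profile `P`. -/
def Blocking {A H T : Type*} (tp : A → T) (μE μ : A → H)
    (P : T → LinearOrder H) : Prop :=
  ∃ (C : Finset A) (μ' : A → H),
    C.Nonempty ∧
    C.val.map μ' = C.val.map μE ∧
    (∀ a ∈ C, (P (tp a)).le (μ a) (μ' a)) ∧
    (∃ a ∈ C, (P (tp a)).lt (μ a) (μ' a))

/-- The allocation `μ` is rationalizable: some strict type-preference profile places
it in the strong core (no blocking coalition). -/
def Rationalizable {A H T : Type*} (tp : A → T) (μE μ : A → H) : Prop :=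
  ∃ P : T → LinearOrder H, ¬ Blocking tp μE μ P

lemma arc_back {A H : Type*} [Fintype A] [Fintype H] (μE μ : A → H)
    (hbal : BalancedAlloc μE μ) :
    ∀ a b : A, arcBig μE μ a b → Relation.ReflTransGen (arcBig μE μ) b a := by
  classical
  intro a b hab
  set R := arcBig μE μ with hR
  set S : Finset A := Finset.univ.filter (fun x => Relation.ReflTransGen R b x) with hS
  have hmemS : ∀ x, x ∈ S ↔ Relation.ReflTransGen R b x := by
    intro x; simp [hS]
  -- forward closure of S
  have hfwd : ∀ x ∈ S, ∀ y, R x y → y ∈ S := by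
    intro x hx y hxy
    exact (hmemS y).mpr (((hmemS x).mp hx).tail hxy)
  -- balance in Finset form
  have hbal' : ∀ h : H, (Finset.univ.filter (fun x => μ x = h)).card
      = (Finset.univ.filter (fun x => μE x = h)).card := by
    intro h
    have := hbal h
    simpa [Nat.card_eq_fintype_card, Fintype.card_subtype] using this
  -- for h with some c ∈ S allocated h, all agents endowed h are in S
  have hclosed : ∀ h : H, ∀ c ∈ S, μ c = h →
      S.filter (fun x => μE x = h) = Finset.univ.filter (fun x => μE x = h) := by
    intro h c hc hch
    apply Finset.Subset.antisymm (Finset.filter_subset_filter _ (Finset.subset_univ S))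
    intro y hy
    have hyE : μE y = h := (Finset.mem_filter.mp hy).2
    have : R c y := by rw [hR]; unfold arcBig; rw [hch, hyE]
    exact Finset.mem_filter.mpr ⟨hfwd c hc y this, hyE⟩
  -- termwise inequality
  have key : ∀ h ∈ (Finset.univ : Finset H),
      (S.filter (fun x => μ x = h)).card ≤ (S.filter (fun x => μE x = h)).card := by
    intro h _
    by_cases hex : ∃ c ∈ S, μ c = h
    · obtain ⟨c, hc, hch⟩ := hex
      calc (S.filter (fun x => μ x = h)).card
          ≤ (Finset.univ.filter (fun x => μ x = h)).card :=
            Finset.card_le_card (Finset.filter_subset_filter _ (Finset.subset_univ S))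
        _ = (Finset.univ.filter (fun x => μE x = h)).card := hbal' h
        _ = (S.filter (fun x => μE x = h)).card := by rw [hclosed h c hc hch]
    · have : S.filter (fun x => μ x = h) = ∅ := by
        apply Finset.filter_eq_empty_iff.mpr
        intro c hc hch
        exact hex ⟨c, hc, hch⟩
      simp [this]
  -- sums are both S.card
  have hsum1 : ∑ h : H, (S.filter (fun x => μ x = h)).card = S.card :=
    (Finset.card_eq_sum_card_fiberwise (fun x _ => Finset.mem_univ (μ x))).symm
  have hsum2 : ∑ h : H, (S.filter (fun x => μE x = h)).card = S.card :=
    (Finset.card_eq_sum_card_fiberwise (fun x _ => Finset.mem_univ (μE x))).symm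
  have heq : ∀ h ∈ (Finset.univ : Finset H),
      (S.filter (fun x => μ x = h)).card = (S.filter (fun x => μE x = h)).card := by
    have := (Finset.sum_eq_sum_iff_of_le key).mp (hsum1.trans hsum2.symm)
    intro h hh; exact (this h hh)
  -- now show a ∈ S
  set h₀ := μ a with hh₀
  have hbS : b ∈ S := (hmemS b).mpr Relation.ReflTransGen.refl
  have hbfib : b ∈ S.filter (fun x => μE x = h₀) :=
    Finset.mem_filter.mpr ⟨hbS, hab.symm⟩
  have hpos : 0 < (S.filter (fun x => μ x = h₀)).card := by
    rw [heq h₀ (Finset.mem_univ _)]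
    exact Finset.card_pos.mpr ⟨b, hbfib⟩
  obtain ⟨c, hc⟩ := Finset.card_pos.mp hpos
  obtain ⟨hcS, hch⟩ := Finset.mem_filter.mp hc
  -- all agents with μ = h₀ are in S
  have hcard : (S.filter (fun x => μ x = h₀)).card
      = (Finset.univ.filter (fun x => μ x = h₀)).card := by
    rw [heq h₀ (Finset.mem_univ _), hclosed h₀ c hcS hch, hbal' h₀]
  have hsub : S.filter (fun x => μ x = h₀) ⊆ Finset.univ.filter (fun x => μ x = h₀) :=
    Finset.filter_subset_filter _ (Finset.subset_univ S)
  have hfeq := Finset.eq_of_subset_of_card_le hsub (le_of_eq hcard.symm)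
  have haS : a ∈ S := by
    have : a ∈ Finset.univ.filter (fun x => μ x = h₀) :=
      Finset.mem_filter.mpr ⟨Finset.mem_univ a, rfl⟩
    rw [← hfeq] at this
    exact (Finset.mem_filter.mp this).1
  exact (hmemS a).mp haS

/-- every SCC of G^big is closed under arcs: if `a` is in an SCC and
`(a,b)` or `(b,a)` is an arc, then `b` is in the same SCC. -/
theorem stmt2 {A H : Type*} [Fintype A] [Fintype H] (μE μ : A → H)
    (hbal : BalancedAlloc μE μ) :
    ∀ a b : A, (arcBig μE μ a b ∨ arcBig μE μ b a) → sameSCC μE μ a b := by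
  intro a b hab
  rcases hab with h | h
  · exact ⟨Relation.ReflTransGen.single h, arc_back μE μ hbal a b h⟩
  · exact ⟨arc_back μE μ hbal b a h, Relation.ReflTransGen.single h⟩
end

section
/- In the allocation graph G^big, for distinct agents a and b, there exists a directed path from a to b if and only if a and b lie in the same strongly connected component; equivalently, there is a directed path from a to b if and only if there is a directed path from b to a. -/
open Finset in
lemma back_path {A H : Type*} [Fintype A] [Fintype H] (μE μ : A → H)
    (hbal : BalancedAlloc μE μ) {a b : A}
    (hab : Relation.ReflTransGen (arcBig μE μ) a b) :
    Relation.ReflTransGen (arcBig μE μ) b a := by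
  classical
  set r := arcBig μE μ with hr
  set S : Finset A := univ.filter (fun x => Relation.ReflTransGen r b x) with hS
  have hSmem : ∀ x, x ∈ S ↔ Relation.ReflTransGen r b x := by
    intro x; simp [hS]
  set HS : Finset H := S.image μ with hHS
  have hEsub : univ.filter (fun c => μE c ∈ HS) ⊆ S := by
    intro c hc
    simp only [mem_filter, mem_univ, true_and] at hc
    obtain ⟨x, hx, hxc⟩ := mem_image.mp hc
    rw [hSmem]
    exact ((hSmem x).1 hx).tail hxc
  have hSsub : S ⊆ univ.filter (fun x => μ x ∈ HS) := by
    intro x hx; simp only [mem_filter, mem_univ, true_and]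
    exact mem_image_of_mem μ hx
  have fib : ∀ (f : A → H), (univ.filter (fun x => f x ∈ HS)).card
      = ∑ h ∈ HS, (univ.filter (fun x => f x = h)).card := by
    intro f
    rw [card_eq_sum_card_fiberwise (f := f) (t := HS)
      (fun x hx => by exact (mem_filter.mp hx).2)]
    apply Finset.sum_congr rfl
    intro h hh
    congr 1
    ext x
    simp only [mem_filter, mem_univ, true_and]
    constructor
    · rintro ⟨_, h2⟩; exact h2
    · intro h2; exact ⟨h2 ▸ hh, h2⟩
  have hcards : (univ.filter (fun x => μ x ∈ HS)).card
      = (univ.filter (fun x => μE x ∈ HS)).card := by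
    rw [fib μ, fib μE]
    apply Finset.sum_congr rfl
    intro h _
    have := hbal h
    simpa [Nat.card_eq_fintype_card, Fintype.card_subtype] using this
  have h1 : (univ.filter (fun c => μE c ∈ HS)).card ≤ S.card := card_le_card hEsub
  have h2 : S.card ≤ (univ.filter (fun x => μ x ∈ HS)).card := card_le_card hSsub
  have hμeq : S = univ.filter (fun x => μ x ∈ HS) :=
    Finset.eq_of_subset_of_card_le hSsub (by omega)
  have hEeq : univ.filter (fun c => μE c ∈ HS) = S :=
    Finset.eq_of_subset_of_card_le hEsub (by omega)
  have inclo : ∀ x y, r x y → y ∈ S → x ∈ S := by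
    intro x y hxy hy
    have hyE : μE y ∈ HS := by
      have : y ∈ univ.filter (fun c => μE c ∈ HS) := hEeq ▸ hy
      simpa using this
    have hx : μ x ∈ HS := by rw [show μ x = μE y from hxy]; exact hyE
    rw [hμeq]; simp [hx]
  have haS : a ∈ S := by
    refine Relation.ReflTransGen.head_induction_on hab ?_ ?_
    · rw [hSmem]
    · intro x y hxy _ hy
      exact inclo x y hxy hy
  exact (hSmem a).1 haS

/-- for distinct agents, a directed path from `a` to `b` exists iff they
are in the same SCC; equivalently, a path from `a` to `b` exists iff one from `b` to `a` does. -/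
theorem stmt3 {A H : Type*} [Fintype A] [Fintype H] (μE μ : A → H)
    (hbal : BalancedAlloc μE μ) :
    ∀ a b : A, a ≠ b →
      (Relation.ReflTransGen (arcBig μE μ) a b ↔ sameSCC μE μ a b) ∧
      (Relation.ReflTransGen (arcBig μE μ) a b ↔ Relation.ReflTransGen (arcBig μE μ) b a) := by
  intro a b _
  refine ⟨⟨fun h => ⟨h, back_path μE μ hbal h⟩, fun h => h.1⟩,
    ⟨fun h => back_path μE μ hbal h, fun h => back_path μE μ hbal h⟩⟩
end

section
/- In the allocation graph G^big, any two agents endowed with the same house type belong to the same strongly connected component: if μ^E(a) = μ^E(b), then a and b are in the same SCC of G^big. -/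
/-!
Fix `a` and let `S` be the set of agents reachable from `a` in G^big. Every agent whose
endowment is one of the houses `μ(S)` is reachable, so `μE⁻¹(μ S) ⊆ S`. Balancedness gives
`|μE⁻¹(μ S)| = |μ⁻¹(μ S)| ≥ |S|`, so the inclusion is an equality; in particular
`μE a ∈ μ(S)`, and hence every agent endowed like `a` is reachable from `a`.
-/

open Finset

namespace BalancedAlloc

variable {A H : Type*} [Fintype A] [DecidableEq H] {μE μ : A → H}

theorem card_filter_eq (hbal : BalancedAlloc μE μ) (h : H) :
    #{x | μ x = h} = #{x | μE x = h} := by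
  simpa only [Nat.card_eq_fintype_card, Fintype.card_subtype] using hbal h

theorem card_filter_mem_eq (hbal : BalancedAlloc μE μ) (T : Finset H) :
    #{x | μ x ∈ T} = #{x | μE x ∈ T} := by
  simp only [← sum_card_fiberwise_eq_card_filter, hbal.card_filter_eq]

theorem mem_image_of_preimage_image_subset (hbal : BalancedAlloc μE μ) {S : Finset A}
    (hS : ∀ y, μE y ∈ S.image μ → y ∈ S) {x : A} (hx : x ∈ S) : μE x ∈ S.image μ := by
  have hsub : ({y | μE y ∈ S.image μ} : Finset A) ⊆ S := fun y hy => hS y (mem_filter.mp hy).2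
  have hle : #S ≤ #{y | μE y ∈ S.image μ} := by
    rw [← hbal.card_filter_mem_eq]
    exact card_le_card fun y hy => mem_filter.mpr ⟨mem_univ y, mem_image_of_mem μ hy⟩
  rw [← eq_of_subset_of_card_le hsub hle] at hx
  exact (mem_filter.mp hx).2

end BalancedAlloc

theorem reflTransGen_arcBig_of_endowment_eq {A H : Type*} [Fintype A] (μE μ : A → H)
    (hbal : BalancedAlloc μE μ) {a b : A} (hab : μE a = μE b) :
    Relation.ReflTransGen (arcBig μE μ) a b := by
  classical
  let S : Finset A := {x | Relation.ReflTransGen (arcBig μE μ) a x}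
  have hS : ∀ y, μE y ∈ S.image μ → y ∈ S := by
    intro y hy
    obtain ⟨x, hxS, hxy⟩ := mem_image.mp hy
    exact mem_filter.mpr ⟨mem_univ y, (mem_filter.mp hxS).2.tail hxy⟩
  have haS : a ∈ S := mem_filter.mpr ⟨mem_univ a, .refl⟩
  have hbS : b ∈ S := hS b (hab ▸ hbal.mem_image_of_preimage_image_subset hS haS)
  exact (mem_filter.mp hbS).2

theorem stmt4_general {A H : Type*} [Fintype A] (μE μ : A → H)
    (hbal : BalancedAlloc μE μ) :
    ∀ a b : A, μE a = μE b → sameSCC μE μ a b := by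
  intro a b hab
  exact ⟨reflTransGen_arcBig_of_endowment_eq μE μ hbal hab,
    reflTransGen_arcBig_of_endowment_eq μE μ hbal hab.symm⟩

/-- any two agents endowed with the same house type lie in the same SCC of G^big. -/
theorem stmt4 {A H : Type*} [Fintype A] [Nonempty A] [Fintype H] (μE μ : A → H)
    (hbal : BalancedAlloc μE μ) :
    ∀ a b : A, μE a = μE b → sameSCC μE μ a b :=
  stmt4_general μE μ hbal
end

section
/- Fix a one-sided matching problem with at least two agent types and at least two house types present. For any allocation μ, there exists a strict preference profile (one strict linear order per agent type over house types) such that μ is not in the strong core with respect to that profile. -/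
/-! Within a pair of agents of different types and different endowments, either the
allocation gives each of them the other's endowment, and then one of them blocks alone
by ranking its own endowment first, or it does not, and then the two block together by
swapping endowments, each type ranking the other agent's endowment first. -/

section LinearOrderWithGreatest

variable {H : Type*}

open Classical in
/-- `h₀` on top, the other elements ordered by a well-order of `H`. -/
@[reducible]
noncomputable def linearOrderWithGreatest (h₀ : H) : LinearOrder H :=
  letI : LinearOrder H := IsWellOrder.linearOrder WellOrderingRel
  LinearOrder.lift' (fun x => toLex (decide (x = h₀), x))
    fun _ _ h => congrArg (fun z => (ofLex z).2) h

theorem linearOrderWithGreatest_lt (h₀ : H) {x : H} (hx : x ≠ h₀) :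
    (linearOrderWithGreatest h₀).lt x h₀ := by
  let _ : LinearOrder H := IsWellOrder.linearOrder WellOrderingRel
  change toLex (decide (x = h₀), x) < toLex (decide (h₀ = h₀), h₀)
  exact Prod.Lex.lt_iff.mpr (Or.inl (by simp [hx]))

theorem linearOrderWithGreatest_le (h₀ x : H) : (linearOrderWithGreatest h₀).le x h₀ := by
  let _ := linearOrderWithGreatest h₀
  rcases eq_or_ne x h₀ with rfl | hx
  · exact le_rfl
  · exact (linearOrderWithGreatest_lt h₀ hx).le

end LinearOrderWithGreatest

theorem exists_ne_and_ne_of_exists_ne {A T H : Type*} {f : A → T} {g : A → H}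
    (hf : ∃ a b, f a ≠ f b) (hg : ∃ a b, g a ≠ g b) : ∃ a b, f a ≠ f b ∧ g a ≠ g b := by
  obtain ⟨a, b, hfab⟩ := hf
  by_cases hgab : g a = g b
  · obtain ⟨e, he⟩ : ∃ e, g e ≠ g a := by
      obtain ⟨c, d, hcd⟩ := hg
      by_contra! h
      exact hcd ((h c).trans (h d).symm)
    rcases ne_or_eq (f e) (f a) with hfe | hfe
    · exact ⟨e, a, hfe, he⟩
    · exact ⟨e, b, hfe ▸ hfab, hgab ▸ he⟩
  · exact ⟨a, b, hfab, hgab⟩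

section Blocking

variable {A H T : Type*} {tp : A → T} {μE μ : A → H} {P : T → LinearOrder H}

theorem blocking_of_lt_endowment {a : A} (ha : (P (tp a)).lt (μ a) (μE a)) :
    Blocking tp μE μ P :=
  ⟨{a}, μE, Finset.singleton_nonempty a, rfl,
    fun _ hx => Finset.mem_singleton.mp hx ▸ @le_of_lt _ (P (tp a)).toPreorder _ _ ha,
    ⟨a, Finset.mem_singleton_self a, ha⟩⟩

theorem blocking_of_swap [DecidableEq A] {a b : A} (hab : a ≠ b)
    (ha : (P (tp a)).le (μ a) (μE b)) (hb : (P (tp b)).le (μ b) (μE a))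
    (hstrict : (P (tp a)).lt (μ a) (μE b) ∨ (P (tp b)).lt (μ b) (μE a)) :
    Blocking tp μE μ P := by
  refine ⟨{a, b}, μE ∘ Equiv.swap a b, Finset.insert_nonempty a {b}, ?_, ?_, ?_⟩
  · rw [Finset.insert_val_of_notMem (by simpa using hab)]
    simp only [Finset.singleton_val, Multiset.map_cons, Multiset.map_singleton,
      Function.comp_apply, Equiv.swap_apply_left, Equiv.swap_apply_right]
    exact Multiset.cons_swap _ _ _
  · simpa using ⟨ha, hb⟩
  · simpa using hstrict

end Blocking

theorem stmt5_general {A H T : Type*} (tp : A → T)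
    (μE μ : A → H)
    (htypes : ∃ a b : A, tp a ≠ tp b)
    (hhouses : ∃ a b : A, μE a ≠ μE b) :
    ∃ P : T → LinearOrder H, Blocking tp μE μ P := by
  classical
  obtain ⟨a, b, htab, heab⟩ := exists_ne_and_ne_of_exists_ne htypes hhouses
  by_cases hcross : μ a = μE b ∧ μ b = μE a
  · refine ⟨fun _ => linearOrderWithGreatest (μE a), blocking_of_lt_endowment (a := a) ?_⟩
    exact linearOrderWithGreatest_lt _ (hcross.1 ▸ heab.symm)
  · let P : T → LinearOrder H := fun t =>
      if t = tp a then linearOrderWithGreatest (μE b) else linearOrderWithGreatest (μE a)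
    have hPa : P (tp a) = linearOrderWithGreatest (μE b) := if_pos rfl
    have hPb : P (tp b) = linearOrderWithGreatest (μE a) := if_neg htab.symm
    refine ⟨P, blocking_of_swap (fun h => htab (congrArg tp h)) ?_ ?_ ?_⟩
    · exact hPa ▸ linearOrderWithGreatest_le _ _
    · exact hPb ▸ linearOrderWithGreatest_le _ _
    · rw [hPa, hPb]
      rcases not_and_or.mp hcross with h | h
      · exact Or.inl (linearOrderWithGreatest_lt _ h)
      · exact Or.inr (linearOrderWithGreatest_lt _ h)

/-- with at least two agent types present and at least two house types
present among endowments, for any allocation there is a strict type-preference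
profile under which the allocation is not in the strong core. -/
theorem stmt5 {A H T : Type*} [Fintype A] [Fintype H] (tp : A → T)
    (μE μ : A → H) (hbal : BalancedAlloc μE μ)
    (htypes : ∃ a b : A, tp a ≠ tp b)
    (hhouses : ∃ a b : A, μE a ≠ μE b) :
    ∃ P : T → LinearOrder H, Blocking tp μE μ P :=
  stmt5_general tp μE μ htypes hhouses
end

section
/- If a problem is rationalizable (i.e., some strict type-preference profile places μ in the strong core), then for all individuals a, b of the same agent type with μ^E(a) = μ^E(b), we have μ(a) = μ(b). (Equal treatment of equals is necessary for rationalizability.) -/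
/-!
Balance yields a permutation `σ` of the agents with `μE ∘ σ = μ`. If `b` prefers `μ a` to `μ b`
although `μE a = μE b`, reroute `σ` through `swap a b` so that `b` receives the house of `a` while
everyone else keeps their assignment. Swapping two points either merges or splits their cycles, so
one of the two reroutings puts `a` outside the cycle of `b`; trading along that cycle blocks `μ`.
Since `a` and `b` share a type, one of them envies the other unless `μ a = μ b`.
-/

open Equiv Equiv.Perm

theorem Equiv.Perm.SameCycle.not_sameCycle_swap_mul {α : Type*} [Finite α] [DecidableEq α]
    {τ : Perm α} {a b : α} (hab : a ≠ b) (h : τ.SameCycle b a) :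
    ¬ (swap a b * τ).SameCycle b a := by
  have hex : ∃ m, (τ ^ m) b = a := h.exists_nat_pow_eq
  set m := Nat.find hex
  have hm : (τ ^ m) b = a := Nat.find_spec hex
  have hne : ∀ i < m, (τ ^ i) b ≠ a := fun i hi => Nat.find_min hex hi
  have hm0 : m ≠ 0 := by
    intro h0
    exact hab (by rw [← hm, h0, pow_zero, one_apply])
  -- a return to `b` before time `m` would reach `a` earlier than `m`
  have hfix : ∀ i, 0 < i → i < m → (τ ^ i) b ≠ b := by
    intro i hi0 him hi
    have hsplit : (τ ^ (m - i)) ((τ ^ i) b) = (τ ^ m) b := by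
      rw [← mul_apply, ← pow_add, Nat.sub_add_cancel him.le]
    rw [hi, hm] at hsplit
    exact hne (m - i) (by omega) hsplit
  have hagree : ∀ i < m, ((swap a b * τ) ^ i) b = (τ ^ i) b := by
    intro i
    induction i with
    | zero => simp
    | succ i ih =>
      intro hi
      rw [pow_succ', mul_apply, ih (by omega), mul_apply, ← mul_apply τ, ← pow_succ',
        swap_apply_of_ne_of_ne (hne _ hi) (hfix _ (by omega) hi)]
  have hperiod : ((swap a b * τ) ^ m) b = b := by
    have hm1 : m = (m - 1) + 1 := by omega
    rw [hm1, pow_succ', mul_apply, hagree _ (by omega), mul_apply, ← mul_apply τ, ← pow_succ',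
      ← hm1, hm, swap_apply_left]
  rintro hs
  obtain ⟨n, hn⟩ := hs.exists_nat_pow_eq
  have hmod : ((swap a b * τ) ^ n) b = (τ ^ (n % m)) b := by
    conv_lhs => rw [← Nat.mod_add_div n m]
    rw [pow_add, mul_apply, pow_mul, pow_apply_eq_self_of_apply_eq_self hperiod,
      hagree _ (Nat.mod_lt _ (Nat.pos_of_ne_zero hm0))]
  exact hne _ (Nat.mod_lt _ (Nat.pos_of_ne_zero hm0)) (hmod ▸ hn)

theorem BalancedAlloc.exists_perm {A H : Type*} [Finite A] {μE μ : A → H}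
    (hbal : BalancedAlloc μE μ) : ∃ σ : Perm A, ∀ x, μE (σ x) = μ x :=
  ⟨Equiv.ofFiberEquiv fun h => (Finite.card_eq.mp (hbal h)).some,
    Equiv.ofFiberEquiv_map _⟩

theorem Finset.val_map_comp_perm {A H : Type*} (f : A → H) (ρ : Perm A) {C : Finset A}
    (hC : ∀ x ∈ C, ρ x ∈ C) : C.val.map (f ∘ ρ) = C.val.map f := by
  have hCρ : C.map ρ.toEmbedding = C :=
    Finset.map_eq_of_subset fun y hy => by
      obtain ⟨x, hx, rfl⟩ := Finset.mem_map.mp hy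
      exact hC x hx
  conv_rhs => rw [← hCρ]
  rw [Finset.map_val, Multiset.map_map]
  rfl

section Blocking

variable {A H T : Type*} (tp : A → T) (μE μ : A → H) (P : T → LinearOrder H)

theorem blocking_of_perm (ρ : Perm A) (C : Finset A) (hC : ∀ x ∈ C, ρ x ∈ C)
    (hweak : ∀ x ∈ C, (P (tp x)).le (μ x) (μE (ρ x)))
    {b : A} (hb : b ∈ C) (hstrict : (P (tp b)).lt (μ b) (μE (ρ b))) :
    Blocking tp μE μ P :=
  ⟨C, μE ∘ ρ, ⟨b, hb⟩, Finset.val_map_comp_perm μE ρ hC, hweak, b, hb, hstrict⟩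

theorem blocking_of_not_sameCycle [Fintype A] [DecidableEq A] {a b : A} (ρ : Perm A)
    (hρ : ∀ x, μE (ρ x) = μ (swap a b x)) (hcyc : ¬ ρ.SameCycle b a)
    (hlt : (P (tp b)).lt (μ b) (μ a)) : Blocking tp μE μ P := by
  have hρb : μE (ρ b) = μ a := by rw [hρ, swap_apply_right]
  refine blocking_of_perm tp μE μ P ρ {x | ρ.SameCycle b x} (fun x hx => ?_) (fun x hx => ?_)
    (Finset.mem_filter.mpr ⟨Finset.mem_univ b, SameCycle.refl ρ b⟩) (hρb ▸ hlt)
  · simpa [sameCycle_apply_right] using hx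
  · have hxa : x ≠ a := by
      rintro rfl
      exact hcyc (Finset.mem_filter.mp hx).2
    let := P (tp x)
    by_cases hxb : x = b
    · subst hxb
      exact le_of_lt (hρb ▸ hlt)
    · rw [hρ, swap_apply_of_ne_of_ne hxa hxb]

theorem blocking_of_envy [Fintype A] [DecidableEq A] {σ : Perm A} (hσ : ∀ x, μE (σ x) = μ x)
    {a b : A} (he : μE a = μE b) (hlt : (P (tp b)).lt (μ b) (μ a)) : Blocking tp μE μ P := by
  have hab : a ≠ b := by
    rintro rfl
    let := P (tp a)
    exact lt_irrefl _ hlt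
  have hswap : ∀ y, μE (swap a b y) = μE y := fun y => by
    rcases eq_or_ne y a with rfl | hya
    · rw [swap_apply_left, he]
    rcases eq_or_ne y b with rfl | hyb
    · rw [swap_apply_right, he]
    rw [swap_apply_of_ne_of_ne hya hyb]
  by_cases hcyc : (σ * swap a b).SameCycle b a
  · exact blocking_of_not_sameCycle tp μE μ P (swap a b * (σ * swap a b))
      (fun x => (hswap _).trans (hσ _)) (hcyc.not_sameCycle_swap_mul hab) hlt
  · exact blocking_of_not_sameCycle tp μE μ P (σ * swap a b) (fun x => hσ _) hcyc hlt

end Blocking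

theorem stmt6_general {A H T : Type*} [Fintype A] (tp : A → T)
    (μE μ : A → H) (hbal : BalancedAlloc μE μ)
    (hrat : Rationalizable tp μE μ) :
    ∀ a b : A, tp a = tp b → μE a = μE b → μ a = μ b := by
  classical
  intro a b ht he
  obtain ⟨P, hcore⟩ := hrat
  obtain ⟨σ, hσ⟩ := hbal.exists_perm
  by_contra hne
  let := P (tp a)
  rcases lt_or_gt_of_ne hne with h | h
  · exact hcore (blocking_of_envy tp μE μ P hσ he.symm h)
  · exact hcore (blocking_of_envy tp μE μ P hσ he (ht ▸ h))

/-- equal treatment of equals is necessary for rationalizability: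
same-type agents with equal endowments must receive the same house type. -/
theorem stmt6 {A H T : Type*} [Fintype A] [Fintype H] (tp : A → T)
    (μE μ : A → H) (hbal : BalancedAlloc μE μ)
    (hrat : Rationalizable tp μE μ) :
    ∀ a b : A, tp a = tp b → μE a = μE b → μ a = μ b :=
  stmt6_general tp μE μ hbal hrat
end

section
/- Main theorem, necessity direction: if in the graph G^big there exist two individuals of the same agent type lying in the same strongly connected component but receiving different house types (μ(a) ≠ μ(b)), then for every strict type-preference profile ≿, the allocation μ is not in the strong core (there exists a blocking coalition, possibly a singleton violating individual rationality). -/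
/-!
Let `a`, `b` be the two agents of the same type, and say their common order ranks `μ b` above
`μ a`. Take a path `b = x₀ → x₁ → ⋯ → xₖ = a` of distinct agents in G^big. Its arcs say that
each of `x₀, …, xₖ₋₁` receives the endowment of its successor, so on the cycle `x₁, …, xₖ` the
allocation `μ`, with `a`'s house replaced by `μ b = μE x₁`, is a reallocation of the cycle's own
endowments. In it everybody keeps their house except `a`, who strictly improves: the cycle blocks.
-/

theorem List.exists_nodup_isChain_cons_of_reflTransGen {α : Type*} {r : α → α → Prop} {a b : α}
    (h : Relation.ReflTransGen r a b) :
    ∃ l : List α, (a :: l).IsChain r ∧ (a :: l).getLast (List.cons_ne_nil _ _) = b ∧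
      (a :: l).Nodup := by
  induction h using Relation.ReflTransGen.head_induction_on with
  | refl => exact ⟨[], .singleton _, rfl, List.nodup_singleton _⟩
  | @head a c hac _ ih =>
    obtain ⟨l, hchain, hlast, hnd⟩ := ih
    by_cases ha : a ∈ c :: l
    · obtain ⟨s, t, hst⟩ := List.append_of_mem ha
      have hsuf : a :: t <:+ c :: l := hst ▸ List.suffix_append s (a :: t)
      refine ⟨t, hchain.suffix hsuf, ?_, hnd.sublist hsuf.sublist⟩
      rw [← hlast]
      simp only [hst, List.getLast_append_of_ne_nil _ (List.cons_ne_nil a t)]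
    · exact ⟨c :: l, hchain.cons_cons hac, by rwa [List.getLast_cons], hnd.cons ha⟩

theorem List.exists_nodup_isChain_cons_append_singleton_of_reflTransGen {α : Type*}
    {r : α → α → Prop} {a b : α} (h : Relation.ReflTransGen r a b) (hne : a ≠ b) :
    ∃ w : List α, (a :: w ++ [b]).IsChain r ∧ (a :: w ++ [b]).Nodup := by
  obtain ⟨l, hchain, hlast, hnd⟩ := List.exists_nodup_isChain_cons_of_reflTransGen h
  have hl : l ≠ [] := by rintro rfl; exact hne hlast
  have hb : l.getLast hl = b := (List.getLast_cons hl).symm.trans hlast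
  obtain ⟨w, rfl⟩ : ∃ w, l = w ++ [b] := ⟨l.dropLast, by rw [← hb, List.dropLast_append_getLast]⟩
  exact ⟨w, hchain, hnd⟩

theorem blocking_of_reflTransGen {A H T : Type*} (tp : A → T) (μE μ : A → H)
    (P : T → LinearOrder H) {u v : A} (huv : Relation.ReflTransGen (arcBig μE μ) u v)
    (hlt : (P (tp v)).lt (μ v) (μ u)) : Blocking tp μE μ P := by
  classical
  let _ : LinearOrder H := P (tp v)
  have hne : u ≠ v := by rintro rfl; exact lt_irrefl _ hlt
  obtain ⟨w, hchain, hnd⟩ :=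
    List.exists_nodup_isChain_cons_append_singleton_of_reflTransGen huv hne
  replace hnd : (w ++ [v]).Nodup := (List.nodup_cons.mp hnd).2
  have hvw : v ∉ w := fun hv => (List.nodup_append.mp hnd).2.2 v hv v (by simp) rfl
  have hshift : (u :: w).map μ = (w ++ [v]).map μE := by
    rw [← List.forall₂_eq_eq_eq, List.forall₂_map_left_iff, List.forall₂_map_right_iff]
    exact List.isChain_cons_append_singleton_iff_forall₂.mp hchain
  set μ' := Function.update μ v (μ u)
  have hμ' : ∀ a ∈ w, μ' a = μ a := fun a ha =>
    Function.update_of_ne (ne_of_mem_of_not_mem ha hvw) _ _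
  refine ⟨(w ++ [v]).toFinset, μ', ⟨v, by simp⟩, ?_, ?_, v, by simp, by simpa [μ'] using hlt⟩
  · rw [List.toFinset_val, hnd.dedup, Multiset.map_coe, Multiset.map_coe,
      Multiset.coe_eq_coe, ← hshift, List.map_append, List.map_congr_left hμ']
    simp [μ', List.perm_append_singleton]
  · intro a ha
    rcases List.mem_append.mp (List.mem_toFinset.mp ha) with ha | ha
    · rw [hμ' a ha]
      exact @le_rfl _ (P (tp a)).toPreorder _
    · obtain rfl := List.mem_singleton.mp ha
      simpa [μ'] using hlt.le

theorem stmt9_general {A H T : Type*} (tp : A → T)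
    (μE μ : A → H)
    (hviol : ∃ a b : A, tp a = tp b ∧ sameSCC μE μ a b ∧ μ a ≠ μ b) :
    ∀ P : T → LinearOrder H, Blocking tp μE μ P := by
  intro P
  obtain ⟨a, b, htp, ⟨hab, hba⟩, hne⟩ := hviol
  let _ : LinearOrder H := P (tp b)
  rcases hne.lt_or_gt with h | h
  · exact blocking_of_reflTransGen tp μE μ P hba (htp ▸ h)
  · exact blocking_of_reflTransGen tp μE μ P hab h

/-- necessity: if two same-type agents in the same SCC of G^big receive
different house types, then for every strict type-preference profile there is a
blocking coalition, i.e. μ is never in the strong core. -/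
theorem stmt9 {A H T : Type*} [Fintype A] [Fintype H] (tp : A → T)
    (μE μ : A → H) (hbal : BalancedAlloc μE μ)
    (hviol : ∃ a b : A, tp a = tp b ∧ sameSCC μE μ a b ∧ μ a ≠ μ b) :
    ∀ P : T → LinearOrder H, Blocking tp μE μ P :=
  stmt9_general tp μE μ hviol
end

section
/- Main theorem, sufficiency direction: if in G^big any two individuals of the same agent type that lie in the same strongly connected component receive the same house type, then the allocation μ is rationalizable: there exists a strict type-preference profile ≿ with μ in the strong core. Moreover such a profile can be built by ordering the SCCs arbitrarily as S_1, ..., S_M and, processing SCCs in order, making each type's allocated house its highest not-yet-assigned preference position. -/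
/-! A set `R` of agents closed under the arcs of G^big contains every owner of a house allocated
in `R`. By balance these owners are as many as the recipients of those houses, which include `R`;
so `R` is exactly both sets and is closed under reversed arcs as well. Hence reachability is
symmetric, and both the owners and the recipients of a house type lie in a single SCC.

Number the SCCs arbitrarily and let each type rank the houses it receives by the number of their
SCC, above all other houses. An agent then strictly prefers only houses of SCCs numbered below its
own, so weakly improving never raises its number; but a coalition trading its own endowments keeps
the total of these numbers, so no number drops and nobody gains. -/

open Finset Function Relation

section

variable {A H T : Type*} {μE μ : A → H}

lemma sameSCC.symm {a b : A} (h : sameSCC μE μ a b) : sameSCC μE μ b a := ⟨h.2, h.1⟩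

lemma sameSCC.trans {a b c : A} (h : sameSCC μE μ a b) (h' : sameSCC μE μ b c) :
    sameSCC μE μ a c :=
  ⟨h.1.trans h'.1, h'.2.trans h.2⟩

def sccSetoid (μE μ : A → H) : Setoid A where
  r := sameSCC μE μ
  iseqv := ⟨fun _ => ⟨.refl, .refl⟩, sameSCC.symm, sameSCC.trans⟩

namespace BalancedAlloc

lemma card_filter_mem [Fintype A] [DecidableEq H] (hbal : BalancedAlloc μE μ) (K : Finset H) :
    #{a | μ a ∈ K} = #{a | μE a ∈ K} := by
  rw [← sum_card_fiberwise_eq_card_filter, ← sum_card_fiberwise_eq_card_filter]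
  refine sum_congr rfl fun h _ => ?_
  simpa only [Nat.card_eq_fintype_card, Fintype.card_subtype] using hbal h

protected lemma symm (hbal : BalancedAlloc μE μ) : BalancedAlloc μ μE :=
  fun h => (hbal h).symm

lemma exists_mu_eq [Finite A] (hbal : BalancedAlloc μE μ) (b : A) : ∃ a, μ a = μE b := by
  have hpos : 0 < Nat.card {a // μ a = μE b} := by
    rw [hbal]
    exact Nat.card_pos_iff.2 ⟨⟨⟨b, rfl⟩⟩, inferInstance⟩
  obtain ⟨⟨a, ha⟩⟩ := (Nat.card_pos_iff.1 hpos).1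
  exact ⟨a, ha⟩

lemma exists_muE_eq [Finite A] (hbal : BalancedAlloc μE μ) (a : A) : ∃ b, μE b = μ a :=
  hbal.symm.exists_mu_eq a

lemma mem_of_arcBig [Fintype A] (hbal : BalancedAlloc μE μ) {R : Finset A}
    (hR : ∀ x ∈ R, ∀ y, arcBig μE μ x y → y ∈ R) {x y : A} (hxy : arcBig μE μ x y)
    (hy : y ∈ R) : x ∈ R := by
  classical
  set K := R.image μ
  set recipients : Finset A := {a | μ a ∈ K}
  set owners : Finset A := {a | μE a ∈ K}
  have hR_sub : R ⊆ recipients := fun a ha =>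
    mem_filter.2 ⟨mem_univ a, mem_image_of_mem μ ha⟩
  have howners_sub : owners ⊆ R := fun b hb => by
    obtain ⟨a, ha, hab⟩ := mem_image.1 (mem_filter.1 hb).2
    exact hR a ha b hab
  have hcard : #recipients = #owners := hbal.card_filter_mem K
  have howners_eq : owners = R :=
    eq_of_subset_of_card_le howners_sub ((card_le_card hR_sub).trans hcard.le)
  have hrecipients_eq : recipients = R :=
    (eq_of_subset_of_card_le hR_sub (hcard.trans (congrArg card howners_eq)).le).symm
  rw [← howners_eq, mem_filter] at hy
  rw [← hrecipients_eq, mem_filter, hxy]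
  exact ⟨mem_univ x, hy.2⟩

lemma reflTransGen_symm [Fintype A] (hbal : BalancedAlloc μE μ) {a b : A}
    (h : ReflTransGen (arcBig μE μ) a b) : ReflTransGen (arcBig μE μ) b a := by
  classical
  set R : Finset A := {z | ReflTransGen (arcBig μE μ) b z}
  have hclosed : ∀ x ∈ R, ∀ y, arcBig μE μ x y → y ∈ R := fun x hx y hxy => by
    simpa [R] using (mem_filter.1 hx).2.tail hxy
  induction h using ReflTransGen.head_induction_on with
  | refl => exact .refl
  | head hac _ ih => simpa [R] using hbal.mem_of_arcBig hclosed hac (by simpa [R] using ih)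

lemma sameSCC_of_arcBig [Fintype A] (hbal : BalancedAlloc μE μ) {a b : A}
    (h : arcBig μE μ a b) : sameSCC μE μ a b :=
  ⟨.single h, hbal.reflTransGen_symm (.single h)⟩

lemma sameSCC_of_mu_eq [Fintype A] (hbal : BalancedAlloc μE μ) {a a' : A} (h : μ a = μ a') :
    sameSCC μE μ a a' := by
  obtain ⟨b, hb⟩ := hbal.exists_muE_eq a
  exact (hbal.sameSCC_of_arcBig hb.symm).trans
    (hbal.sameSCC_of_arcBig (h.symm.trans hb.symm)).symm

lemma exists_houseRank [Fintype A] (hbal : BalancedAlloc μE μ) :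
    ∃ r : H → ℕ, (∀ a, r (μ a) = r (μE a)) ∧ ∀ a a', r (μ a) = r (μ a') → sameSCC μE μ a a' := by
  obtain ⟨f, hf⟩ := exists_injective_nat (Quotient (sccSetoid μE μ))
  set s : A → ℕ := fun a => f (Quotient.mk _ a)
  have hs : ∀ a a', s a = s a' ↔ sameSCC μE μ a a' := fun a a' => hf.eq_iff.trans Quotient.eq
  have hfac : s.FactorsThrough μ := fun a a' h => (hs a a').2 (hbal.sameSCC_of_mu_eq h)
  refine ⟨extend μ s 0, fun a => ?_, fun a a' h => ?_⟩
  · obtain ⟨c, hc⟩ := hbal.exists_mu_eq a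
    rw [← hc, hfac.extend_apply, hfac.extend_apply]
    exact ((hs c a).2 (hbal.sameSCC_of_arcBig hc)).symm
  · rwa [hfac.extend_apply, hfac.extend_apply, hs] at h

end BalancedAlloc

lemma not_blocking_of_rank (tp : A → T) (P : T → LinearOrder H) (r : H → ℕ)
    (hr : ∀ a, r (μ a) = r (μE a)) (hP : ∀ a h, (P (tp a)).lt (μ a) h → r h < r (μ a)) :
    ¬ Blocking tp μE μ P := by
  rintro ⟨C, μ', -, hmap, hweak, a, ha, hstrict⟩
  have hle : ∀ b ∈ C, r (μ' b) ≤ r (μ b) := fun b hb => by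
    rcases @lt_or_eq_of_le H (P (tp b)).toPartialOrder _ _ (hweak b hb) with hlt | heq
    · exact (hP b _ hlt).le
    · rw [heq]
  have hsum : ∑ b ∈ C, r (μ' b) = ∑ b ∈ C, r (μ b) := by
    simpa only [sum_eq_multiset_sum, Multiset.map_map, comp_def, hr] using
      congrArg (fun m => (m.map r).sum) hmap
  exact (sum_lt_sum hle ⟨a, ha, hP a _ hstrict⟩).ne hsum

open Classical in
/-- The paper's profile: type `t` ranks the houses it receives by the number `r` of their SCC,
above all other houses. -/
noncomputable def prefKey (tp : A → T) (μ : A → H) (r code : H → ℕ) (t : T) (h : H) :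
    WithTop ℕ ×ₗ ℕ :=
  toLex (if ∃ a, tp a = t ∧ μ a = h then (r h : WithTop ℕ) else ⊤, code h)

lemma prefKey_injective (tp : A → T) (μ : A → H) (r : H → ℕ) {code : H → ℕ}
    (hcode : Injective code) (t : T) : Injective (prefKey tp μ r code t) :=
  fun _ _ h => hcode (congrArg (fun k => (ofLex k).2) h)

noncomputable abbrev rankPref (tp : A → T) (μ : A → H) (r : H → ℕ) {code : H → ℕ}
    (hcode : Injective code) (t : T) : LinearOrder H :=
  LinearOrder.lift' (fun h => OrderDual.toDual (prefKey tp μ r code t h))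
    (OrderDual.toDual.injective.comp (prefKey_injective tp μ r hcode t))

lemma rank_lt_of_rankPref_lt (tp : A → T) {r code : H → ℕ} (hcode : Injective code)
    (hr : ∀ a a', tp a = tp a' → r (μ a) = r (μ a') → μ a = μ a') {a : A} {h : H}
    (hlt : (rankPref tp μ r hcode (tp a)).lt (μ a) h) : r h < r (μ a) := by
  change prefKey tp μ r code (tp a) h < prefKey tp μ r code (tp a) (μ a) at hlt
  have hself : ∃ a', tp a' = tp a ∧ μ a' = μ a := ⟨a, rfl, rfl⟩
  unfold prefKey at hlt
  rw [if_pos hself, Prod.Lex.toLex_lt_toLex] at hlt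
  split_ifs at hlt with hh
  · obtain ⟨a', hta', rfl⟩ := hh
    rcases hlt with hlt | ⟨heq, hcodelt⟩
    · exact WithTop.coe_lt_coe.1 hlt
    · rw [hr a' a hta' (WithTop.coe_injective heq)] at hcodelt
      exact (lt_irrefl _ hcodelt).elim
  · simp at hlt

end

/-- sufficiency: if any two same-type agents in the same SCC of G^big
receive the same house type, then μ is rationalizable: there is a strict
type-preference profile placing μ in the strong core. -/
theorem stmt10 {A H T : Type*} [Fintype A] [Fintype H] (tp : A → T)
    (μE μ : A → H) (hbal : BalancedAlloc μE μ)
    (hcond : ∀ a b : A, tp a = tp b → sameSCC μE μ a b → μ a = μ b) :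
    Rationalizable tp μE μ := by
  obtain ⟨r, hrE, hrSCC⟩ := hbal.exists_houseRank
  obtain ⟨code, hcode⟩ := exists_injective_nat H
  exact ⟨rankPref tp μ r hcode, not_blocking_of_rank tp _ r hrE fun a h hlt =>
    rank_lt_of_rankPref_lt tp hcode (fun a a' ht hr => hcond a a' ht (hrSCC a a' hr)) hlt⟩
end

section
/- Full characterization: a one-sided matching problem (A, 𝒜, H, L, μ^E, μ) is rationalizable if and only if for all same-type individuals a, b in the same strongly connected component of G^big, μ(a) = μ(b). -/
open Relation

theorem List.exists_nodup_isChain_of_reflTransGen {α : Type*} {r : α → α → Prop} {a b : α}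
    (h : ReflTransGen r a b) :
    ∃ l : List α, l.IsChain r ∧ l.head? = some a ∧ l.getLast? = some b ∧ l.Nodup := by
  induction h with
  | refl => exact ⟨[a], by simp⟩
  | @tail c d _ hcd ih =>
    obtain ⟨l, hl, hhead, hlast, hnd⟩ := ih
    by_cases hd : d ∈ l
    · obtain ⟨s, t, rfl⟩ := List.append_of_mem hd
      have hpre : s ++ [d] <+: s ++ d :: t := ⟨t, by simp⟩
      refine ⟨s ++ [d], hl.prefix hpre, ?_, by simp, hnd.sublist hpre.sublist⟩
      cases s <;> simp_all
    · refine ⟨l ++ [d], hl.append (by simp) ?_, ?_, by simp, ?_⟩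
      · simpa [hlast] using hcd
      · cases l <;> simp_all
      · exact hnd.append (by simp) (by simpa using hd)

theorem Equivalence.exists_nat_eq_iff {α : Type*} [Countable α] {r : α → α → Prop}
    (hr : Equivalence r) : ∃ f : α → ℕ, ∀ x y, f x = f y ↔ r x y := by
  let s : Setoid α := ⟨r, hr⟩
  obtain ⟨e, he⟩ := exists_injective_nat (Quotient s)
  exact ⟨fun x => e ⟦x⟧, fun x y => he.eq_iff.trans Quotient.eq⟩

theorem equivalence_mutualReflTransGen {α : Type*} (r : α → α → Prop) :
    Equivalence fun x y => ReflTransGen r x y ∧ ReflTransGen r y x :=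
  ⟨fun _ => ⟨.refl, .refl⟩, fun h => ⟨h.2, h.1⟩,
    fun h₁ h₂ => ⟨h₁.1.trans h₂.1, h₂.2.trans h₁.2⟩⟩

section Matching

variable {A H T : Type*} {μE μ : A → H}

lemma coe_map_update_eq_coe_map_endow [DecidableEq A] {l : List A}
    (hl : l.IsChain (arcBig μE μ)) (hnd : l.Nodup) {y a : A} (hy : l.head? = some y)
    (ha : l.getLast? = some a) :
    (l.map (Function.update μ a (μE y)) : Multiset H) = l.map μE := by
  obtain ⟨t, rfl⟩ := List.head?_eq_some_iff.mp hy
  have hsplit := List.dropLast_append_getLast? a ha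
  have hshift : (y :: t).dropLast.map μ = t.map μE := by
    rw [← List.forall₂_eq_eq_eq, List.forall₂_map_left_iff, List.forall₂_map_right_iff]
    exact List.isChain_iff_forall₂.mp hl
  have ha' : a ∉ (y :: t).dropLast := by
    rw [← hsplit] at hnd
    exact fun h => (List.nodup_append.mp hnd).2.2 a h a (by simp) rfl
  conv_lhs => rw [← hsplit]
  have hkeep : (y :: t).dropLast.map (Function.update μ a (μE y)) = (y :: t).dropLast.map μ :=
    List.map_congr_left fun x hx => Function.update_of_ne (ne_of_mem_of_not_mem hx ha') _ _
  rw [List.map_append, hkeep, hshift]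
  simp [List.perm_append_singleton]

lemma exists_trade_of_reflTransGen [DecidableEq A] {y a : A}
    (h : ReflTransGen (arcBig μE μ) y a) :
    ∃ C : Finset A, a ∈ C ∧ C.val.map (Function.update μ a (μE y)) = C.val.map μE := by
  obtain ⟨l, hl, hy, ha, hnd⟩ := List.exists_nodup_isChain_of_reflTransGen h
  exact ⟨⟨l, hnd⟩, List.mem_of_getLast? ha, coe_map_update_eq_coe_map_endow hl hnd hy ha⟩

lemma blocking_of_sameSCC (tp : A → T) (P : T → LinearOrder H) {a b : A}
    (hscc : sameSCC μE μ a b) (hlt : (P (tp a)).lt (μ a) (μ b)) : Blocking tp μE μ P := by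
  classical
  let _ : LinearOrder H := P (tp a)
  have hab : a ≠ b := by rintro rfl; exact lt_irrefl _ hlt
  obtain ⟨z, hbz, hza⟩ := hscc.2.cases_head.resolve_left hab.symm
  obtain ⟨C, haC, htrade⟩ := exists_trade_of_reflTransGen hza
  rw [← show μ b = μE z from hbz] at htrade
  refine ⟨C, Function.update μ a (μ b), ⟨a, haC⟩, htrade, fun x _ => ?_, a, haC, by simpa⟩
  rcases eq_or_ne x a with rfl | hxa
  · simpa using hlt.le
  · simpa [hxa] using (P (tp x)).le_refl (μ x)

lemma Rationalizable.eq_of_sameSCC {tp : A → T} (hrat : Rationalizable tp μE μ) {a b : A}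
    (htp : tp a = tp b) (hscc : sameSCC μE μ a b) : μ a = μ b := by
  obtain ⟨P, hP⟩ := hrat
  let _ : LinearOrder H := P (tp a)
  rcases lt_trichotomy (μ a) (μ b) with hlt | heq | hgt
  · exact absurd (blocking_of_sameSCC tp P hscc hlt) hP
  · exact heq
  · have hgt' : (P (tp b)).lt (μ b) (μ a) := htp ▸ hgt
    exact absurd (blocking_of_sameSCC tp P ⟨hscc.2, hscc.1⟩ hgt') hP

def houseArc (μE μ : A → H) (h h' : H) : Prop := ∃ c, μE c = h ∧ μ c = h'

lemma BalancedAlloc.map_univ_eq [Fintype A] (hbal : BalancedAlloc μE μ) :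
    (Finset.univ : Finset A).val.map μ = Finset.univ.val.map μE := by
  classical
  ext h
  simpa [Multiset.count_map, eq_comm, Fintype.card_subtype, Finset.card, Finset.filter_val]
    using hbal h

lemma BalancedAlloc.reflTransGen_houseArc [Fintype A] (hbal : BalancedAlloc μE μ) (a : A) :
    ReflTransGen (houseArc μE μ) (μ a) (μE a) := by
  classical
  let D : Set H := {h | ReflTransGen (houseArc μE μ) (μ a) h}
  let S : (A → H) → Finset A := fun ν => Finset.univ.filter (ν · ∈ D)
  have hsub : S μE ⊆ S μ := by
    intro x hx
    simp only [S, Finset.mem_filter, Finset.mem_univ, true_and] at hx ⊢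
    exact hx.tail ⟨x, rfl, rfl⟩
  have hcard (ν : A → H) :
      (S ν).card = Multiset.card ((Finset.univ.val.map ν).filter (· ∈ D)) := by
    simp [S, Multiset.filter_map, Finset.card]
  have hS : S μE = S μ :=
    Finset.eq_of_subset_of_card_le hsub (by rw [hcard, hcard, hbal.map_univ_eq])
  have ha : a ∈ S μE := hS ▸ by simp [S, D, ReflTransGen.refl]
  simpa [S, D] using ha

lemma Relation.ReflTransGen.houseArc_of_arcBig {a b : A}
    (h : ReflTransGen (arcBig μE μ) a b) : ReflTransGen (houseArc μE μ) (μ a) (μ b) :=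
  h.lift μ fun _ y hxy => ⟨y, hxy.symm, rfl⟩

lemma Relation.ReflTransGen.arcBig_of_houseArc {a b : A}
    (h : ReflTransGen (houseArc μE μ) (μ a) (μE b)) : ReflTransGen (arcBig μE μ) a b := by
  generalize hb : μE b = h' at h
  induction h generalizing b with
  | refl => exact .single hb.symm
  | tail _ hstep ih =>
    obtain ⟨c, hc, hcb⟩ := hstep
    exact (ih hc).tail (hcb.trans hb.symm)

lemma BalancedAlloc.sameSCC_iff [Fintype A] (hbal : BalancedAlloc μE μ) {a b : A} :
    sameSCC μE μ a b ↔
      ReflTransGen (houseArc μE μ) (μ a) (μ b) ∧ ReflTransGen (houseArc μE μ) (μ b) (μ a) :=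
  ⟨fun h => ⟨h.1.houseArc_of_arcBig, h.2.houseArc_of_arcBig⟩, fun h =>
    ⟨(h.1.trans (hbal.reflTransGen_houseArc b)).arcBig_of_houseArc,
      (h.2.trans (hbal.reflTransGen_houseArc a)).arcBig_of_houseArc⟩⟩

noncomputable abbrev lexPref (ψ ι : H → ℕ) (hι : Function.Injective ι)
    (chosen : H → Prop) : LinearOrder H :=
  LinearOrder.lift' (fun h => toLex (ψ h, toLex (chosen h, ι h))) fun _ _ h =>
    hι (congrArg (fun k => (ofLex (ofLex k).2).2) h)

section lexPref

variable {ψ ι : H → ℕ} {hι : Function.Injective ι} {chosen : H → Prop} {h h' : H}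

lemma le_of_lexPref_le (hle : (lexPref ψ ι hι chosen).le h h') : ψ h ≤ ψ h' :=
  Prod.Lex.monotone_fst _ _ hle

lemma chosen_of_lexPref_lt (hlt : (lexPref ψ ι hι chosen).lt h h')
    (hψ : ψ h = ψ h') (hc : chosen h) : chosen h' := by
  rcases Prod.Lex.toLex_lt_toLex.mp hlt with hψlt | ⟨-, hlt'⟩
  · exact absurd hψ hψlt.ne
  · rcases Prod.Lex.toLex_lt_toLex.mp hlt' with hclt | ⟨hceq, -⟩
    · exact absurd (fun _ => hc) (not_le_of_gt hclt)
    · exact cast hceq hc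

end lexPref

lemma rationalizable_of_tradeInvariant [Countable H] {tp : A → T} (ψ : H → ℕ)
    (hψ : ∀ x, ψ (μE x) = ψ (μ x))
    (hsep : ∀ a b, tp a = tp b → ψ (μ a) = ψ (μ b) → μ a = μ b) : Rationalizable tp μE μ := by
  obtain ⟨ι, hι⟩ := exists_injective_nat H
  refine ⟨fun t => lexPref ψ ι hι (fun h => ∃ w, tp w = t ∧ μ w = h), ?_⟩
  rintro ⟨C, μ', -, htrade, hweak, a, haC, hstrict⟩
  have hle : ∀ x ∈ C, ψ (μ x) ≤ ψ (μ' x) := fun x hx => le_of_lexPref_le (hweak x hx)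
  have hsum : ∑ x ∈ C, ψ (μ x) = ∑ x ∈ C, ψ (μ' x) := by
    calc ∑ x ∈ C, ψ (μ x) = ((C.val.map μE).map ψ).sum := by
          rw [Multiset.map_map]; exact (Finset.sum_congr rfl fun x _ => hψ x).symm
      _ = ((C.val.map μ').map ψ).sum := by rw [htrade]
      _ = ∑ x ∈ C, ψ (μ' x) := by rw [Multiset.map_map]; rfl
  have hψa : ψ (μ a) = ψ (μ' a) := (Finset.sum_eq_sum_iff_of_le hle).mp hsum a haC
  obtain ⟨w, hw, hwa⟩ := chosen_of_lexPref_lt hstrict hψa ⟨a, rfl, rfl⟩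
  have hwa' : μ w = μ a := hsep w a hw (by rw [hwa, hψa])
  rw [← hwa, hwa'] at hstrict
  exact @lt_irrefl _ (lexPref ψ ι hι _).toPreorder _ hstrict

end Matching

/-- full characterization: the problem is rationalizable iff any two
same-type agents in the same SCC of G^big receive the same house type. -/
theorem stmt11 {A H T : Type*} [Fintype A] [Fintype H] (tp : A → T)
    (μE μ : A → H) (hbal : BalancedAlloc μE μ) :
    Rationalizable tp μE μ ↔
      ∀ a b : A, tp a = tp b → sameSCC μE μ a b → μ a = μ b := by
  refine ⟨fun hrat a b htp hscc => hrat.eq_of_sameSCC htp hscc, fun hsep => ?_⟩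
  obtain ⟨ψ, hψ⟩ := (equivalence_mutualReflTransGen (houseArc μE μ)).exists_nat_eq_iff
  refine rationalizable_of_tradeInvariant ψ (fun x => (hψ _ _).2 ?_) fun a b htp hab =>
    hsep a b htp (hbal.sameSCC_iff.2 ((hψ _ _).1 hab))
  exact ⟨.single ⟨x, rfl, rfl⟩, hbal.reflTransGen_houseArc x⟩
end

section
/- In G^big, if two strongly connected components S and S' each admit a directed cycle covering all their vertices and there is an arc from a vertex of S to a vertex of S' whose endpoints' endowment types also appear in the other component appropriately (specifically, some vertex of S and some vertex of S' share an endowment house type), then S = S': distinct SCCs of G^big contain no common endowment house type and no arcs between them. -/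
open Relation Finset in
private lemma key_counts {A H : Type*} [Fintype A] [Fintype H] (μE μ : A → H)
    (hbal : BalancedAlloc μE μ) (b : A) [DecidablePred (ReflTransGen (arcBig μE μ) b)]
    [DecidableEq H] :
    ∀ h : H,
      ((Finset.univ.filter fun v => ReflTransGen (arcBig μE μ) b v).filter fun v => μ v = h).card
    = ((Finset.univ.filter fun v => ReflTransGen (arcBig μE μ) b v).filter fun v => μE v = h).card := by
  classical
  set S := Finset.univ.filter fun v => ReflTransGen (arcBig μE μ) b v with hS
  have hclosed : ∀ v ∈ S, ∀ w, μ v = μE w → w ∈ S := by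
    intro v hv w hvw
    simp only [hS, Finset.mem_filter, Finset.mem_univ, true_and] at hv ⊢
    exact hv.tail hvw
  have hbal' : ∀ h : H, (Finset.univ.filter fun a => μ a = h).card
      = (Finset.univ.filter fun a => μE a = h).card := by
    intro h
    have := hbal h
    simpa [Nat.card_eq_fintype_card, Fintype.card_subtype] using this
  have hle : ∀ h : H, (S.filter fun v => μ v = h).card ≤ (S.filter fun v => μE v = h).card := by
    intro h
    rcases Nat.eq_zero_or_pos (S.filter fun v => μ v = h).card with h0 | hpos
    · simp [h0]
    · obtain ⟨v, hv⟩ := Finset.card_pos.mp hpos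
      simp only [Finset.mem_filter] at hv
      have hsub : (Finset.univ.filter fun a => μE a = h) ⊆ S.filter fun v => μE v = h := by
        intro w hw
        simp only [Finset.mem_filter, Finset.mem_univ, true_and] at hw ⊢
        exact ⟨hclosed v hv.1 w (hv.2.trans hw.symm), hw⟩
      calc (S.filter fun v => μ v = h).card
          ≤ (Finset.univ.filter fun a => μ a = h).card :=
            Finset.card_le_card (Finset.filter_subset_filter _ (Finset.filter_subset _ _))
        _ = (Finset.univ.filter fun a => μE a = h).card := hbal' h
        _ ≤ (S.filter fun v => μE v = h).card := Finset.card_le_card hsub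
  have hsum1 : ∑ h : H, (S.filter fun v => μ v = h).card = S.card :=
    (Finset.card_eq_sum_card_fiberwise (fun v _ => Finset.mem_univ (μ v))).symm
  have hsum2 : ∑ h : H, (S.filter fun v => μE v = h).card = S.card :=
    (Finset.card_eq_sum_card_fiberwise (fun v _ => Finset.mem_univ (μE v))).symm
  intro h
  exact (Finset.sum_eq_sum_iff_of_le (fun i _ => hle i)).mp (hsum1.trans hsum2.symm) h
    (Finset.mem_univ h)

open Relation in
private lemma reach_step {A H : Type*} [Fintype A] [Fintype H] (μE μ : A → H)
    (hbal : BalancedAlloc μE μ) (b v w : A)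
    (hv : ReflTransGen (arcBig μE μ) b v)
    (hw : μE w = μE v ∨ μ w = μE v ∨ μ w = μ v ∨ μE w = μ v) :
    ReflTransGen (arcBig μE μ) b w := by
  classical
  set S := Finset.univ.filter fun v => ReflTransGen (arcBig μE μ) b v with hS
  have hmem : ∀ x, x ∈ S ↔ ReflTransGen (arcBig μE μ) b x := by
    intro x; simp [hS]
  have hcount := key_counts μE μ hbal b
  have main : ∀ h : H, (∃ u ∈ S, μ u = h) → ∀ w, (μ w = h ∨ μE w = h) → w ∈ S := by
    rintro h ⟨u, hu, huh⟩ w hwh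
    have hEw : ∀ x, μE x = h → x ∈ S := fun x hx =>
      (hmem x).mpr (((hmem u).mp hu).tail (show μ u = μE x from huh.trans hx.symm))
    rcases hwh with hwh | hwh
    · have hsubE : (Finset.univ.filter fun a => μE a = h) ⊆ S.filter fun x => μE x = h := by
        intro x hx
        simp only [Finset.mem_filter, Finset.mem_univ, true_and] at hx ⊢
        exact ⟨hEw x hx, hx⟩
      have hEfull : (S.filter fun x => μE x = h) = Finset.univ.filter fun a => μE a = h :=
        Finset.Subset.antisymm (Finset.filter_subset_filter _ (Finset.filter_subset _ _)) hsubE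
      have hbal' : (Finset.univ.filter fun a => μ a = h).card
          = (Finset.univ.filter fun a => μE a = h).card := by
        have := hbal h
        simpa [Nat.card_eq_fintype_card, Fintype.card_subtype] using this
      have hcards : (S.filter fun x => μ x = h).card
          = (Finset.univ.filter fun a => μ a = h).card := by
        rw [hcount h, hEfull, ← hbal']
      have hfull : (S.filter fun x => μ x = h) = Finset.univ.filter fun a => μ a = h :=
        Finset.eq_of_subset_of_card_le
          (Finset.filter_subset_filter _ (Finset.filter_subset _ _)) (le_of_eq hcards.symm)
      have hwS : w ∈ S.filter fun x => μ x = h := by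
        rw [hfull]; simp [hwh]
      exact (Finset.mem_filter.mp hwS).1
    · exact hEw w hwh
  have hvS : v ∈ S := (hmem v).mpr hv
  have hEv : ∃ u ∈ S, μ u = μE v := by
    have hpos : 0 < (S.filter fun x => μE x = μE v).card :=
      Finset.card_pos.mpr ⟨v, Finset.mem_filter.mpr ⟨hvS, rfl⟩⟩
    have hposf : 0 < (S.filter fun x => μ x = μE v).card := by
      rw [hcount (μE v)]; exact hpos
    obtain ⟨u, hu⟩ := Finset.card_pos.mp hposf
    simp only [Finset.mem_filter] at hu
    exact ⟨u, hu.1, hu.2⟩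
  rcases hw with hw | hw | hw | hw
  · exact (hmem w).mp (main (μE v) hEv w (Or.inr hw))
  · exact (hmem w).mp (main (μE v) hEv w (Or.inl hw))
  · exact (hmem w).mp (main (μ v) ⟨v, hvS, rfl⟩ w (Or.inl hw))
  · exact (hmem w).mp (main (μ v) ⟨v, hvS, rfl⟩ w (Or.inr hw))

/-- distinct SCCs of G^big share no endowment house type and have no
arcs between them: if a,b are not in the same SCC then their endowments differ and
there is no arc between them in either direction. -/
theorem stmt18 {A H : Type*} [Fintype A] [Fintype H] (μE μ : A → H)
    (hbal : BalancedAlloc μE μ) :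
    ∀ a b : A, ¬ sameSCC μE μ a b →
      μE a ≠ μE b ∧ ¬ arcBig μE μ a b ∧ ¬ arcBig μE μ b a := by
  intro a b hnab
  refine ⟨?_, ?_, ?_⟩
  · intro hcontra
    exact hnab ⟨reach_step μE μ hbal a a b Relation.ReflTransGen.refl (Or.inl hcontra.symm),
      reach_step μE μ hbal b b a Relation.ReflTransGen.refl (Or.inl hcontra)⟩
  · intro hcontra
    exact hnab ⟨Relation.ReflTransGen.single hcontra,
      reach_step μE μ hbal b b a Relation.ReflTransGen.refl (Or.inr (Or.inl hcontra))⟩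
  · intro hcontra
    exact hnab ⟨reach_step μE μ hbal a a b Relation.ReflTransGen.refl (Or.inr (Or.inl hcontra)),
      Relation.ReflTransGen.single hcontra⟩
end

section
/- For every SCC S of G^big, the multiset of houses allocated within S equals the multiset of houses endowed within S: for each house type h, |{a ∈ S : μ(a) = h}| = |{a ∈ S : μ^E(a) = h}|. In particular, any coalition that is a union of SCCs can only redistribute its own endowments among itself. -/
/-- within every SCC of G^big (the SCC of any agent a), the multiset of
allocated houses equals the multiset of endowed houses: for each house type the counts agree. -/
theorem stmt19 {A H : Type*} [Fintype A] [Fintype H] (μE μ : A → H)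
    (hbal : BalancedAlloc μE μ) :
    ∀ (a : A) (h : H),
      Nat.card {b : A // sameSCC μE μ a b ∧ μ b = h} =
      Nat.card {b : A // sameSCC μE μ a b ∧ μE b = h} := by

  classical
  set r := Relation.ReflTransGen (arcBig μE μ) with hr
  -- global balance in Finset form
  have hbal' : ∀ h : H, (Finset.univ.filter fun b => μ b = h).card
      = (Finset.univ.filter fun b => μE b = h).card := by
    intro h
    have := hbal h
    simpa [Nat.card_eq_fintype_card, Fintype.card_subtype] using this
  -- forward closure: if some agent allocated h is reachable from v, then all agents
  -- endowed with h are reachable from v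
  have fwd : ∀ (v : A) (h : H), (Finset.univ.filter fun b => r v b ∧ μ b = h).Nonempty →
      (Finset.univ.filter fun b => r v b ∧ μE b = h)
        = Finset.univ.filter fun b => μE b = h := by
    intro v h ⟨b, hb⟩
    simp only [Finset.mem_filter, Finset.mem_univ, true_and] at hb
    apply Finset.Subset.antisymm
    · intro c hc
      simp only [Finset.mem_filter, Finset.mem_univ, true_and] at hc ⊢
      exact hc.2
    · intro c hc
      simp only [Finset.mem_filter, Finset.mem_univ, true_and] at hc ⊢
      exact ⟨hb.1.tail (show arcBig μE μ b c from hb.2.trans hc.symm), hc⟩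
  -- per-house-type balance on the reachability set of any vertex
  have key : ∀ (v : A) (h : H),
      (Finset.univ.filter fun b => r v b ∧ μ b = h).card
        = (Finset.univ.filter fun b => r v b ∧ μE b = h).card := by
    intro v
    have hle : ∀ h : H, (Finset.univ.filter fun b => r v b ∧ μ b = h).card
        ≤ (Finset.univ.filter fun b => r v b ∧ μE b = h).card := by
      intro h
      rcases (Finset.univ.filter fun b => r v b ∧ μ b = h).eq_empty_or_nonempty with he | hne
      · simp [he]
      · rw [fwd v h hne, ← hbal' h]
        apply Finset.card_le_card
        intro b hb
        simp only [Finset.mem_filter, Finset.mem_univ, true_and] at hb ⊢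
        exact hb.2
    have part : ∀ f : A → H, (Finset.univ.filter fun b => r v b).card
        = ∑ h : H, (Finset.univ.filter fun b => r v b ∧ f b = h).card := by
      intro f
      rw [Finset.card_eq_sum_card_fiberwise (f := f) (t := Finset.univ)
        (fun b _ => Finset.mem_univ _)]
      simp [Finset.filter_filter]
    have hsum : ∑ h : H, (Finset.univ.filter fun b => r v b ∧ μ b = h).card
        = ∑ h : H, (Finset.univ.filter fun b => r v b ∧ μE b = h).card := by
      rw [← part μ, ← part μE]
    exact fun h => (Finset.sum_eq_sum_iff_of_le (fun i _ => hle i)).mp hsum h (Finset.mem_univ h)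
  -- backward closure of reachability sets
  have back : ∀ (v c d : A), r v d → μ c = μE d → r v c := by
    intro v c d hvd hcd
    have hdmem : d ∈ Finset.univ.filter fun b => r v b ∧ μE b = μE d := by
      simp [hvd]
    have hAne : (Finset.univ.filter fun b => r v b ∧ μ b = μE d).Nonempty := by
      rw [← Finset.card_pos, key v (μE d)]
      exact Finset.card_pos.mpr ⟨d, hdmem⟩
    have hsub : (Finset.univ.filter fun b => r v b ∧ μ b = μE d)
        ⊆ Finset.univ.filter fun b => μ b = μE d := by
      intro b hb
      simp only [Finset.mem_filter, Finset.mem_univ, true_and] at hb ⊢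
      exact hb.2
    have hcard : (Finset.univ.filter fun b => μ b = μE d).card
        ≤ (Finset.univ.filter fun b => r v b ∧ μ b = μE d).card := by
      rw [key v (μE d), fwd v (μE d) hAne, ← hbal' (μE d)]
    have heq := Finset.eq_of_subset_of_card_le hsub hcard
    have : c ∈ Finset.univ.filter fun b => r v b ∧ μ b = μE d := by
      rw [heq]; simp [hcd]
    simp only [Finset.mem_filter] at this
    exact this.2.1
  -- symmetry of reachability
  have symm : ∀ v b : A, r v b → r b v := by
    intro v b hvb
    induction hvb with
    | refl => exact Relation.ReflTransGen.refl
    | @tail x y hvx harc ih =>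
      exact Relation.ReflTransGen.trans (back y x y Relation.ReflTransGen.refl harc) ih
  -- conclude
  intro a h
  have hiff : ∀ f : A → H, ∀ b : A, (sameSCC μE μ a b ∧ f b = h) ↔ (r a b ∧ f b = h) := by
    intro f b
    constructor
    · rintro ⟨⟨h1, _⟩, h2⟩; exact ⟨h1, h2⟩
    · rintro ⟨h1, h2⟩; exact ⟨⟨h1, symm a b h1⟩, h2⟩
  have e1 : Nat.card {b : A // sameSCC μE μ a b ∧ μ b = h}
      = (Finset.univ.filter fun b => r a b ∧ μ b = h).card := by
    rw [Nat.card_congr (Equiv.subtypeEquivRight (hiff μ))]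
    simp [Nat.card_eq_fintype_card, Fintype.card_subtype]
  have e2 : Nat.card {b : A // sameSCC μE μ a b ∧ μE b = h}
      = (Finset.univ.filter fun b => r a b ∧ μE b = h).card := by
    rw [Nat.card_congr (Equiv.subtypeEquivRight (hiff μE))]
    simp [Nat.card_eq_fintype_card, Fintype.card_subtype]
  rw [e1, e2, key a h]
end
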